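/- Let G be a graph with terminals x, y that is an obstruction for the class A^k_{xy} (i.e., G ∉ A^k_{xy} but every single edge deletion or contraction lands in A^k_{xy}), and suppose G does not embed into S_k. Then xy ∉ E(G), and G is a minimal (topological) obstruction for S_k: G does not embed in S_k but G - e embeds in S_k for every edge e. -/

import Mathlib

open SimpleGraph

namespace AltPaper

variable {V : Type*} {W : Type*} {U : Type*}

/-- The dart-reversal permutation of a graph. -/
def dartRev (G : SimpleGraph V) : Equiv.Perm G.Dart :=
  Function.Involutive.toPerm SimpleGraph.Dart.symm SimpleGraph.Dart.symm_involutive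

/-- A combinatorial embedding of `G` into an orientable surface, given by a rotation system:
a permutation of the darts whose orbits are exactly the stars of the vertices. -/
structure RotSys (G : SimpleGraph V) where
  rot : Equiv.Perm G.Dart
  fst_rot : ∀ d : G.Dart, (rot d).fst = d.fst
  orbit_full : ∀ d d' : G.Dart, d.fst = d'.fst → ∃ n : ℕ, (rot ^ n) d = d'

namespace RotSys

variable {G : SimpleGraph V}

/-- The face-tracing permutation of the rotation system. -/
def facePerm (R : RotSys G) : Equiv.Perm G.Dart := (dartRev G).trans R.rot

/-- The number of faces of the embedding: the number of orbits of the face permutation. -/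
noncomputable def numFaces (R : RotSys G) : ℕ :=
  Nat.card (MulAction.orbitRel.Quotient (Subgroup.zpowers R.facePerm) G.Dart)

/-- The number of non-isolated vertices: orbits of the rotation. -/
noncomputable def numVerts (R : RotSys G) : ℕ :=
  Nat.card (MulAction.orbitRel.Quotient (Subgroup.zpowers R.rot) G.Dart)

/-- The number of connected components containing at least one edge. -/
noncomputable def numComps (R : RotSys G) : ℕ :=
  Nat.card (MulAction.orbitRel.Quotient (Subgroup.closure {R.rot, dartRev G}) G.Dart)

/-- By Euler's formula, the (total, orientable) genus of the embedding `R` is at most `k`.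
Isolated vertices are irrelevant for the genus and are ignored. -/
noncomputable def genusLE (R : RotSys G) (k : ℕ) : Prop :=
  2 * R.numComps + Nat.card G.edgeSet ≤ 2 * k + R.numFaces + R.numVerts

/-- Vertices `v₁ v₂ v₃ v₄` appear (in this cyclic order) on a common face of `R`. -/
def cyclicOrderedFace (R : RotSys G) (v₁ v₂ v₃ v₄ : V) : Prop :=
  ∃ (d : G.Dart) (a b c : ℕ), 0 < a ∧ a < b ∧ b < c ∧
    c < Function.minimalPeriod (⇑R.facePerm) d ∧
    d.fst = v₁ ∧ ((R.facePerm ^ a) d).fst = v₂ ∧ ((R.facePerm ^ b) d).fst = v₃ ∧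
    ((R.facePerm ^ c) d).fst = v₄

/-- There is a face of `R` in which `x` and `y` appear (at least) twice, in the alternating
cyclic order `x, y, x, y`. -/
def altFace (R : RotSys G) (x y : V) : Prop := R.cyclicOrderedFace x y x y

/-- `u` and `v` lie on a common face of `R`. -/
def Cofacial (R : RotSys G) (u v : V) : Prop :=
  ∃ (d : G.Dart) (n : ℕ), d.fst = u ∧ ((R.facePerm ^ n) d).fst = v

/-- All vertices of `s` lie on a common face of `R`. -/
def CofacialSet (R : RotSys G) (s : Set V) : Prop :=
  ∃ d : G.Dart, ∀ v ∈ s, ∃ n : ℕ, ((R.facePerm ^ n) d).fst = v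

end RotSys

/-- `G` embeds in the orientable surface of genus `k`. -/
def GenusLE (G : SimpleGraph V) (k : ℕ) : Prop := ∃ R : RotSys G, R.genusLE k

/-- `G` has an embedding in the orientable surface of genus `k` with a face in which the
vertices `x` and `y` appear twice, in alternating cyclic order. -/
def AltEmb (G : SimpleGraph V) (x y : V) (k : ℕ) : Prop :=
  ∃ R : RotSys G, R.genusLE k ∧ R.altFace x y

end AltPaper
namespace AltPaper

variable {V : Type*} {W : Type*} {U : Type*}

/-- A combinatorial embedding of `G` into a (possibly non-orientable) surface:
a rotation system together with a signature on the edges. -/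
structure SRS (G : SimpleGraph V) where
  rot : Equiv.Perm G.Dart
  fst_rot : ∀ d : G.Dart, (rot d).fst = d.fst
  orbit_full : ∀ d d' : G.Dart, d.fst = d'.fst → ∃ n : ℕ, (rot ^ n) d = d'
  sign : Sym2 V → Bool

namespace SRS

variable {G : SimpleGraph V}

/-- Auxiliary involution used in signed face tracing: reverse the dart and update the side. -/
def flip (S : SRS G) : Equiv.Perm (G.Dart × Bool) :=
  Function.Involutive.toPerm (fun p => (p.1.symm, xor p.2 (S.sign p.1.edge)))
    (by
      rintro ⟨d, s⟩
      have h1 : d.symm.symm = d := SimpleGraph.Dart.symm_involutive d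
      have h2 : d.symm.edge = d.edge := SimpleGraph.Dart.edge_symm d
      simp [h1, h2, Bool.xor_assoc])

/-- Auxiliary permutation used in signed face tracing: apply the rotation forwards or
backwards according to the current side. -/
def rotPm (S : SRS G) : Equiv.Perm (G.Dart × Bool) where
  toFun p := (cond p.2 (S.rot p.1) (S.rot.symm p.1), p.2)
  invFun p := (cond p.2 (S.rot.symm p.1) (S.rot p.1), p.2)
  left_inv := by rintro ⟨d, (_ | _)⟩ <;> simp
  right_inv := by rintro ⟨d, (_ | _)⟩ <;> simp

/-- The signed face-tracing permutation, acting on sided darts. -/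
def facePerm (S : SRS G) : Equiv.Perm (G.Dart × Bool) := (S.flip).trans (S.rotPm)

/-- Twice the number of faces (each face is traced once on each side). -/
noncomputable def numFaces2 (S : SRS G) : ℕ :=
  Nat.card (MulAction.orbitRel.Quotient (Subgroup.zpowers S.facePerm) (G.Dart × Bool))

noncomputable def numVerts (S : SRS G) : ℕ :=
  Nat.card (MulAction.orbitRel.Quotient (Subgroup.zpowers S.rot) G.Dart)

noncomputable def numComps (S : SRS G) : ℕ :=
  Nat.card (MulAction.orbitRel.Quotient (Subgroup.closure {S.rot, dartRev G}) G.Dart)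

/-- Twice the (total) Euler genus of the embedding, via Euler's formula. -/
noncomputable def eulerGenus2 (S : SRS G) : ℤ :=
  4 * S.numComps - 2 * S.numVerts + 2 * Nat.card G.edgeSet - S.numFaces2

/-- The Euler genus of the embedding is at most `h`. -/
noncomputable def eulerGenusLE (S : SRS G) (h : ℕ) : Prop := S.eulerGenus2 ≤ 2 * h

/-- The sided darts `p` and `q` lie on the same face. -/
def SameFace (S : SRS G) (p q : G.Dart × Bool) : Prop := ∃ n : ℤ, (S.facePerm ^ n) p = q

/-- The set of darts of the facial walk of the face of `p`. -/
def faceDarts (S : SRS G) (p : G.Dart × Bool) : Set G.Dart :=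
  {d | ∃ q, S.SameFace p q ∧ q.1 = d}

/-- The vertex `v` appears on the facial walk of the face of `p`. -/
def vertexOnFace (S : SRS G) (p : G.Dart × Bool) (v : V) : Prop :=
  ∃ d ∈ S.faceDarts p, d.fst = v

/-- The facial walk of the face of `p` visits `x` and `y` in alternating cyclic order
`x, y, x, y`. -/
def altFaceS (S : SRS G) (p : G.Dart × Bool) (x y : V) : Prop :=
  ∃ (a b c : ℕ), 0 < a ∧ a < b ∧ b < c ∧
    c < Function.minimalPeriod (⇑S.facePerm) p ∧
    p.1.fst = x ∧ ((S.facePerm ^ a) p).1.fst = y ∧ ((S.facePerm ^ b) p).1.fst = x ∧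
    ((S.facePerm ^ c) p).1.fst = y

end SRS

/-- `G` embeds in the projective plane. -/
def ProjPlanar (G : SimpleGraph V) : Prop := ∃ S : SRS G, S.eulerGenusLE 1

end AltPaper
namespace AltPaper

variable {V : Type*} {W : Type*} {U : Type*}

/-! ### The multigraph obtained by identifying two vertices, and its planar embeddings -/

/-- The darts of the multigraph `Ĥ` obtained from `G` by identifying `x` and `y`
(deleting the edge `xy` first, if present). -/
def PD (G : SimpleGraph V) (x y : V) : Type _ := {d : G.Dart // d.edge ≠ s(x, y)}

/-- The source vertex of a dart of `Ĥ`: the identified vertex `v_{xy}` is represented by `x`. -/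
def psrc (G : SimpleGraph V) (x y : V) [DecidableEq V] (d : PD G x y) : V :=
  if d.val.fst = y then x else d.val.fst

/-- Dart reversal in `Ĥ`. -/
def prev (G : SimpleGraph V) (x y : V) : Equiv.Perm (PD G x y) :=
  Function.Involutive.toPerm
    (fun d => ⟨d.val.symm, by rw [SimpleGraph.Dart.edge_symm]; exact d.prop⟩)
    (by
      rintro ⟨d, hd⟩
      exact Subtype.ext (SimpleGraph.Dart.symm_involutive d))

/-- A combinatorial embedding (in an orientable surface) of the multigraph `Ĥ` obtained from
`G` by identifying `x` and `y` into the vertex `v_{xy}` (loops are discarded). -/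
structure PinchRS (G : SimpleGraph V) (x y : V) [DecidableEq V] where
  rot : Equiv.Perm (PD G x y)
  src_rot : ∀ d, psrc G x y (rot d) = psrc G x y d
  orbit_full : ∀ d d', psrc G x y d = psrc G x y d' → ∃ n : ℕ, (rot ^ n) d = d'

namespace PinchRS

variable [DecidableEq V] {G : SimpleGraph V} {x y : V}

def facePerm (P : PinchRS G x y) : Equiv.Perm (PD G x y) := (prev G x y).trans P.rot

noncomputable def numFaces (P : PinchRS G x y) : ℕ :=
  Nat.card (MulAction.orbitRel.Quotient (Subgroup.zpowers P.facePerm) (PD G x y))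

noncomputable def numVerts (P : PinchRS G x y) : ℕ :=
  Nat.card (MulAction.orbitRel.Quotient (Subgroup.zpowers P.rot) (PD G x y))

noncomputable def numComps (P : PinchRS G x y) : ℕ :=
  Nat.card (MulAction.orbitRel.Quotient (Subgroup.closure {P.rot, prev G x y}) (PD G x y))

/-- The embedding `P` of `Ĥ` is planar (Euler's formula; the dart count is twice the
edge count). -/
noncomputable def Planar (P : PinchRS G x y) : Prop :=
  4 * P.numComps + Nat.card (PD G x y) ≤ 2 * P.numFaces + 2 * P.numVerts

/-- The number of label transitions in the cyclic sequence of labels around the identified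
vertex `v_{xy}`: a dart incident with `v_{xy}` is labelled `X` when it comes from `x`. -/
noncomputable def pinchTrans (P : PinchRS G x y) : ℕ :=
  Nat.card {d : PD G x y // psrc G x y d = x ∧
    ¬ ((d.val.fst = x) ↔ ((P.rot d).val.fst = x))}

end PinchRS

/-! ### Splitting the two terminals -/

/-- The projection recording that `Sum.inr false` is the second copy of `x` and
`Sum.inr true` is the second copy of `y` (while `Sum.inl x`, `Sum.inl y` are the first
copies). -/
def splitProj (x y : V) : V ⊕ Bool → V
  | Sum.inl v => v
  | Sum.inr false => x
  | Sum.inr true => y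

/-- `G'` is obtained from `G` by splitting `x` into `x₁ = Sum.inl x`, `x₂ = Sum.inr false`
and `y` into `y₁ = Sum.inl y`, `y₂ = Sum.inr true`, distributing the incident edges. -/
def IsSplitAt (G : SimpleGraph V) (x y : V) (G' : SimpleGraph (V ⊕ Bool)) : Prop :=
  (∀ a b, G'.Adj a b → G.Adj (splitProj x y a) (splitProj x y b)) ∧
  (∀ u v, G.Adj u v → ∃ a b, G'.Adj a b ∧ splitProj x y a = u ∧ splitProj x y b = v) ∧
  (∀ a b a' b', G'.Adj a b → G'.Adj a' b' →
    splitProj x y a = splitProj x y a' → splitProj x y b = splitProj x y b' → a = a' ∧ b = b')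

/-- The simple graph `G/xy` obtained from `G` by identifying `x` and `y` (the edge `xy`,
if present, is deleted first, and multiple edges are merged); the merged vertex is `x`,
and `y` becomes isolated. -/
def pinch (G : SimpleGraph V) (x y : V) : SimpleGraph V :=
  SimpleGraph.fromRel (fun a b => a ≠ y ∧ b ≠ y ∧
    ∃ a' b', G.Adj a' b' ∧ (a' = a ∨ (a' = y ∧ a = x)) ∧ (b' = b ∨ (b' = y ∧ b = x)))

/-- The graph `G*`: the `xy`-sum of `G` with a copy of `K₅` minus an edge, the two ends of
the deleted edge being identified with `x` and `y`. -/
def Gstar (G : SimpleGraph V) (x y : V) : SimpleGraph (V ⊕ Fin 3) :=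
  SimpleGraph.fromRel (fun a b =>
    (∃ u v, a = Sum.inl u ∧ b = Sum.inl v ∧ G.Adj u v) ∨
    (∃ i j : Fin 3, a = Sum.inr i ∧ b = Sum.inr j) ∨
    (∃ i : Fin 3, a = Sum.inr i ∧ (b = Sum.inl x ∨ b = Sum.inl y)))

/-- The two-terminal graph corresponding to an `XY`-labelled graph `H`:
add the terminal `x = Sum.inr false` joined to all `X`-labelled vertices and the terminal
`y = Sum.inr true` joined to all `Y`-labelled vertices. -/
def termGraph (H : SimpleGraph W) (lX lY : W → Prop) : SimpleGraph (W ⊕ Bool) :=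
  SimpleGraph.fromRel (fun a b =>
    (∃ u v, a = Sum.inl u ∧ b = Sum.inl v ∧ H.Adj u v) ∨
    (∃ u, a = Sum.inr false ∧ b = Sum.inl u ∧ lX u) ∨
    (∃ u, a = Sum.inr true ∧ b = Sum.inl u ∧ lY u))

/-- Identification map used for `xy`-sums: `w₁ ↦ u₁`, `w₂ ↦ u₂`. -/
def sumRho [DecidableEq W] (u₁ u₂ : U) (w₁ w₂ : W) : W → U ⊕ W := fun w =>
  if w = w₁ then Sum.inl u₁ else if w = w₂ then Sum.inl u₂ else Sum.inr w

/-- The `xy`-sum of `H₁` (with terminals `u₁, u₂`) and `H₂` (with terminals `w₁, w₂`):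
their union after identifying `u₁` with `w₁` and `u₂` with `w₂`; the edge between the two
identified vertices is deleted even if present in a summand. -/
def xySum [DecidableEq W] (H₁ : SimpleGraph U) (u₁ u₂ : U)
    (H₂ : SimpleGraph W) (w₁ w₂ : W) : SimpleGraph (U ⊕ W) :=
  SimpleGraph.fromRel (fun p q => s(p, q) ≠ s(Sum.inl u₁, Sum.inl u₂) ∧
    ((∃ a b, p = Sum.inl a ∧ q = Sum.inl b ∧ H₁.Adj a b) ∨
     (∃ a b, H₂.Adj a b ∧ p = sumRho u₁ u₂ w₁ w₂ a ∧ q = sumRho u₁ u₂ w₁ w₂ b)))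

/-! ### Subdivisions -/

/-- A subdivision of `K` contained in `G`: branch vertices are given by the injection `f`,
branches are internally disjoint paths avoiding the branch vertices. -/
structure SubdivisionEmb (K : SimpleGraph U) (G : SimpleGraph V) where
  f : U → V
  inj : Function.Injective f
  walk : ∀ {a b : U}, K.Adj a b → G.Walk (f a) (f b)
  isPath : ∀ {a b : U} (h : K.Adj a b), (walk h).IsPath
  symmCompat : ∀ {a b : U} (h : K.Adj a b), walk h.symm = (walk h).reverse
  internal_disj : ∀ {a b c d : U} (h₁ : K.Adj a b) (h₂ : K.Adj c d), s(a, b) ≠ s(c, d) →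
    ∀ v, v ∈ (walk h₁).support → v ∈ (walk h₂).support →
      (v = f a ∨ v = f b) ∧ (v = f c ∨ v = f d)
  branch_only : ∀ {a b : U} (h : K.Adj a b) (u : U), f u ∈ (walk h).support → u = a ∨ u = b

/-- The set of vertices of the subdivision. -/
def SubSupport {K : SimpleGraph U} {G : SimpleGraph V} (s : SubdivisionEmb K G) : Set V :=
  {v | ∃ (a b : U) (h : K.Adj a b), v ∈ (s.walk h).support}

/-- The set of edges of the subdivision. -/
def SubEdges {K : SimpleGraph U} {G : SimpleGraph V} (s : SubdivisionEmb K G) : Set (Sym2 V) :=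
  {e | ∃ (a b : U) (h : K.Adj a b), e ∈ (s.walk h).edges}

/-! ### Blocks -/

/-- `B` is a block of `H`: a maximal connected vertex set without cutvertex. -/
def IsBlock (H : SimpleGraph W) (B : Set W) : Prop :=
  B.Nonempty ∧ (H.induce B).Preconnected ∧ (∀ v : W, (H.induce (B \ {v})).Preconnected) ∧
  ∀ B' : Set W, B ⊆ B' →
    ((H.induce B').Preconnected ∧ ∀ v : W, (H.induce (B' \ {v})).Preconnected) → B' = B

/-! ### Bridges of a cycle -/

/-- The `C`-bridge generated by a set `K` of vertices (the component) : `K` together with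
all edges leaving `K` and their endpoints. -/
def bridgeOf (G : SimpleGraph V) (K : Set V) : G.Subgraph where
  verts := K ∪ {v | ∃ u ∈ K, G.Adj u v}
  Adj a b := G.Adj a b ∧ (a ∈ K ∨ b ∈ K)
  adj_sub h := h.1
  edge_vert := by
    rintro a b ⟨h, ha | hb⟩
    · exact Or.inl ha
    · exact Or.inr ⟨b, hb, h.symm⟩
  symm := by
    constructor
    rintro a b ⟨h, hab⟩
    exact ⟨h.symm, hab.symm⟩

/-- `B` is a `C`-bridge in `G`, for a closed walk `C`: either a chord of `C`, or a connected
component of `G - V(C)` together with all edges joining it to `C`. -/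
def IsCBridge {r : V} (G : SimpleGraph V) (C : G.Walk r r) (B : G.Subgraph) : Prop :=
  (∃ (a b : V) (h : G.Adj a b), a ∈ C.support ∧ b ∈ C.support ∧ s(a, b) ∉ C.edges ∧
      B = G.subgraphOfAdj h) ∨
  (∃ c : (G.induce {v | v ∉ C.support}).ConnectedComponent,
      B = bridgeOf G (Subtype.val '' c.supp))

/-- The attachments of a `C`-bridge `B`. -/
def attachments {G : SimpleGraph V} {r : V} (C : G.Walk r r) (B : G.Subgraph) : Set V :=
  B.verts ∩ {v | v ∈ C.support}

/-- The vertex set of the segment `C[u,v]` of the closed walk `C` from `u` to `v` (in the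
orientation of `C`). -/
def segSet [DecidableEq V] {r : V} (G : SimpleGraph V) (C : G.Walk r r) (u v : V) : Set V :=
  {w | ∃ (hu : u ∈ C.support) (hv : v ∈ (C.rotate u hu).support),
    w ∈ ((C.rotate u hu).takeUntil v hv).support}

/-- Two `C`-bridges avoid each other. -/
def Avoid [DecidableEq V] {r : V} (G : SimpleGraph V) (C : G.Walk r r)
    (B₁ B₂ : G.Subgraph) : Prop :=
  ∃ u v, u ∈ C.support ∧ v ∈ C.support ∧
    attachments C B₁ ⊆ segSet G C u v ∧ attachments C B₂ ⊆ segSet G C v u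

/-- Two `C`-bridges overlap. -/
def Overlap [DecidableEq V] {r : V} (G : SimpleGraph V) (C : G.Walk r r)
    (B₁ B₂ : G.Subgraph) : Prop := ¬ Avoid G C B₁ B₂

/-! ### The classes `A^k_{xy}` and their obstructions -/

/-- Contraction of the edge `uv` of `G`: `v` is merged into `u` (and becomes isolated). -/
def contractEdge (G : SimpleGraph V) (u v : V) : SimpleGraph V :=
  SimpleGraph.fromRel (fun a b => a ≠ v ∧ b ≠ v ∧
    (G.Adj a b ∨ (a = u ∧ G.Adj v b) ∨ (b = u ∧ G.Adj a v)))

/-- The class `A^k_{xy}`: `G` embeds in the orientable surface of genus `k-1`, or `G` is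
`xy`-alternating on the orientable surface of genus `k`. -/
def Akxy (G : SimpleGraph V) (x y : V) (k : ℕ) : Prop :=
  GenusLE G (k - 1) ∨ AltEmb G x y k

/-- `G` (with terminals `x, y`) is an obstruction for the class `A^k_{xy}`: it is not in the
class, but every deletion and every allowed contraction (one which does not identify the two
terminals) is. -/
def MinimalNotAk (G : SimpleGraph V) (x y : V) (k : ℕ) : Prop :=
  ¬ Akxy G x y k ∧
  (∀ e ∈ G.edgeSet, Akxy (G.deleteEdges {e}) x y k) ∧
  (∀ u v, G.Adj u v → v ≠ x → v ≠ y → Akxy (contractEdge G u v) x y k)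

/-! ### Cyclic label sequences -/

/-- The number of transitions between consecutive entries of a list. -/
def listTrans (w : List Bool) : ℕ := ((w.zip w.tail).filter (fun p => p.1 ≠ p.2)).length

/-- The number of transitions of a list, viewed as a cyclic sequence. -/
def cycTrans : List Bool → ℕ
  | [] => 0
  | a :: t => listTrans ((a :: t) ++ [a])

/-- The cyclic sequence of labelled vertices (labels are subsets of `{X, Y}`, with
`true = X`, `false = Y`) contains six distinct vertices, in this cyclic order or its
reverse, whose labels contain `X, Y, X, Y, X, Y` respectively. -/
def HasXYXYXY (n : ℕ) (lab : ZMod (n + 1) → Finset Bool) : Prop :=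
  ∃ (s : ZMod (n + 1)) (a : Fin 6 → ℕ) (ε : Bool), StrictMono a ∧ a 5 ≤ n ∧
    ∀ k : Fin 6, (decide (k.val % 2 = 0)) ∈
      lab (s + (if ε then ((a k : ℕ) : ZMod (n + 1)) else -((a k : ℕ) : ZMod (n + 1))))

/-- `L` arranges the labels of each vertex of the cyclic sequence into a list (each label
used exactly once). -/
def IsArrangement (n : ℕ) (lab : ZMod (n + 1) → Finset Bool)
    (L : ZMod (n + 1) → List Bool) : Prop :=
  ∀ i, (L i).Nodup ∧ (L i).toFinset = lab i

/-- The cyclic label sequence obtained by concatenating the arranged labels in the cyclic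
order of the vertices. -/
def arranged (n : ℕ) (L : ZMod (n + 1) → List Bool) : List Bool :=
  (List.ofFn (fun j : Fin (n + 1) => L ((j : ℕ) : ZMod (n + 1)))).flatten

end AltPaper

/-!
Deleting an edge `e` puts `G - e` in `A^k_{xy}`, and both alternatives give an embedding of genus
at most `k`. If `xy` were an edge, `G - xy` would be in `A^k_{xy}` as well: an embedding of genus
at most `k - 1` extends to `G` by adding `xy` anywhere, which raises the genus by at most one, and
an `xy`-alternating embedding has `x` and `y` on a common face, inside which `xy` can be drawn
without raising the genus. Either way `G` would embed in `S_k`.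

Combinatorially, drawing `xy` means inserting its two darts into the rotations at `x` and `y`,
which multiplies the rotation and the face permutation by two transpositions each. Multiplying a
permutation by a transposition changes its number of cycles by one, and splits a cycle exactly when
both transposed points lie on it; Euler's formula turns these counts into the genus bounds.
-/

theorem Nat.card_lt_of_surjective_of_not_injective {α β : Type*} [Finite α] {f : α → β}
    (hf : Function.Surjective f) (hf' : ¬ Function.Injective f) : Nat.card β < Nat.card α := by
  have := Finite.of_surjective f hf
  cases nonempty_fintype α
  cases nonempty_fintype β
  simpa only [Nat.card_eq_fintype_card] using Fintype.card_lt_of_surjective_not_injective f hf hf'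

section

open Function Set

namespace Equiv.Perm

variable {α β : Type*}

/-- The cycles of `π`; fixed points count as cycles of length one. -/
abbrev Cycles (π : Perm α) : Type _ := MulAction.orbitRel.Quotient (Subgroup.zpowers π) α

noncomputable def numCycles (π : Perm α) : ℕ := Nat.card π.Cycles

def cycleClass (π : Perm α) (a : α) : π.Cycles := Quotient.mk'' a

theorem cycleClass_eq_iff {π : Perm α} {a b : α} :
    π.cycleClass a = π.cycleClass b ↔ SameCycle π a b := by
  rw [cycleClass, cycleClass, Quotient.eq'', MulAction.orbitRel_apply, MulAction.mem_orbit_iff,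
    sameCycle_comm]
  constructor
  · rintro ⟨⟨g, hg⟩, rfl⟩
    obtain ⟨k, rfl⟩ := Subgroup.mem_zpowers_iff.mp hg
    exact ⟨k, rfl⟩
  · rintro ⟨k, rfl⟩
    exact ⟨⟨π ^ k, k, rfl⟩, rfl⟩

theorem cycleClass_swap_apply [DecidableEq α] {π : Perm α} {u v : α} (h : SameCycle π u v)
    (a : α) : π.cycleClass (swap u v a) = π.cycleClass a := by
  rw [cycleClass_eq_iff, swap_apply_def]
  split_ifs with hu hv
  · exact hu ▸ h.symm
  · exact hv ▸ h
  · rfl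

theorem cycleClass_surjective (π : Perm α) : Surjective π.cycleClass := Quotient.mk''_surjective

theorem cycleClass_apply (π : Perm α) (a : α) : π.cycleClass (π a) = π.cycleClass a :=
  cycleClass_eq_iff.2 (sameCycle_apply_left.2 (SameCycle.refl π a))

variable [Finite α]

theorem SameCycle.apply_eq_of_invariant {π : Perm α} {f : α → β} (hf : ∀ a, f (π a) = f a)
    {a b : α} (h : SameCycle π a b) : f a = f b := by
  obtain ⟨n, rfl⟩ := h.exists_nat_pow_eq
  clear h
  induction n with
  | zero => rfl
  | succ n ih => rw [pow_succ', mul_apply, hf, ih]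

theorem SameCycle.mem_of_mapsTo {π : Perm α} {S : Set α} (hS : MapsTo π S S) {a b : α}
    (h : SameCycle π a b) (ha : a ∈ S) : b ∈ S := by
  obtain ⟨n, rfl⟩ := h.exists_nat_pow_eq
  rw [coe_pow]
  exact hS.iterate n ha

def Cycles.lift {π : Perm α} (f : α → β) (hf : ∀ a, f (π a) = f a) : π.Cycles → β :=
  Quotient.lift f fun a _ h =>
    (cycleClass_eq_iff.1 (Quotient.sound h : π.cycleClass a = _)).apply_eq_of_invariant hf

theorem SameCycle.of_semiconj {π : Perm α} {g : Perm β} {ι : β ↪ α}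
    (hι : ∀ b, π (ι b) = ι (g b)) {b b' : β} (h : SameCycle g b b') :
    SameCycle π (ι b) (ι b') :=
  have : Finite β := Finite.of_injective ι ι.injective
  cycleClass_eq_iff.1 <| h.apply_eq_of_invariant (f := fun b => π.cycleClass (ι b)) fun c => by
    simp only [← hι, cycleClass_apply]

theorem numCycles_add_ncard_le {π : Perm α} {g : Perm β} (ι : β ↪ α)
    (hι : ∀ b, π (ι b) = ι (g b)) {S : Set α} (hS : _root_.Disjoint S (range ι))
    (hSπ : S.Pairwise fun a b => ¬ SameCycle π a b) :
    g.numCycles + S.ncard ≤ π.numCycles := by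
  have : Finite β := Finite.of_injective ι ι.injective
  have hpow : ∀ (n : ℕ) b, (π ^ n) (ι b) = ι ((g ^ n) b) := by
    intro n
    induction n with
    | zero => simp
    | succ n ih => simp [pow_succ', ih, hι]
  have hrange : MapsTo π (range ι) (range ι) := by
    rintro _ ⟨b, rfl⟩
    exact ⟨g b, (hι b).symm⟩
  let j : g.Cycles ⊕ S → π.Cycles :=
    Sum.elim (Cycles.lift (fun b => π.cycleClass (ι b)) fun b => by
      rw [← hι, cycleClass_apply]) fun s => π.cycleClass s
  have hj : Injective j := by
    rintro (q | ⟨s, hs⟩) (q' | ⟨s', hs'⟩) h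
    · obtain ⟨b, rfl⟩ := g.cycleClass_surjective q
      obtain ⟨b', rfl⟩ := g.cycleClass_surjective q'
      obtain ⟨n, hn⟩ := (cycleClass_eq_iff.1 h).exists_nat_pow_eq
      rw [hpow] at hn
      exact congrArg Sum.inl (cycleClass_eq_iff.2 ⟨n, by simpa using ι.injective hn⟩)
    · obtain ⟨b, rfl⟩ := g.cycleClass_surjective q
      exact (hS.ne_of_mem hs' ((cycleClass_eq_iff.1 h).mem_of_mapsTo hrange ⟨b, rfl⟩) rfl).elim
    · obtain ⟨b, rfl⟩ := g.cycleClass_surjective q'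
      have hs_range := (cycleClass_eq_iff.1 h).symm.mem_of_mapsTo hrange ⟨b, rfl⟩
      exact (hS.ne_of_mem hs hs_range rfl).elim
    · by_cases hss : s = s'
      · subst hss
        rfl
      · exact (hSπ hs hs' hss (cycleClass_eq_iff.1 h)).elim
  simpa [numCycles, Nat.card_sum, Nat.card_coe_set_eq] using Nat.card_le_card_of_injective j hj

variable [DecidableEq α]

theorem numCycles_le_numCycles_mul_swap_add_one (π : Perm α) (u v : α) :
    π.numCycles ≤ (π * swap u v).numCycles + 1 := by
  classical
  -- merging the cycle of `v` into that of `u` gives a function invariant under `π * swap u v`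
  let collapse : α → π.Cycles := fun a =>
    if π.cycleClass a = π.cycleClass v then π.cycleClass u else π.cycleClass a
  have hinv : ∀ a, collapse ((π * swap u v) a) = collapse a := by
    intro a
    simp only [collapse, mul_apply, cycleClass_apply, swap_apply_def]
    split_ifs <;> simp_all
  let f : (π * swap u v).Cycles ⊕ Unit → π.Cycles :=
    Sum.elim (Cycles.lift collapse hinv) fun _ => π.cycleClass v
  have hf : Surjective f := by
    intro q
    obtain ⟨a, rfl⟩ := π.cycleClass_surjective q
    by_cases ha : π.cycleClass a = π.cycleClass v
    · exact ⟨Sum.inr (), ha.symm⟩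
    · exact ⟨Sum.inl ((π * swap u v).cycleClass a), if_neg ha⟩
  simpa [numCycles, Nat.card_sum] using Nat.card_le_card_of_surjective f hf

theorem not_sameCycle_mul_swap {π : Perm α} {u v : α} (huv : u ≠ v) (h : SameCycle π u v) :
    ¬ SameCycle (π * swap u v) u v := by
  classical
  have hex : ∃ n, 0 < n ∧ (π ^ n) v = u := by
    obtain ⟨n, hn, -, h⟩ := h.symm.exists_pow_eq''
    exact ⟨n, hn, h⟩
  obtain ⟨hn0, hnu⟩ := Nat.find_spec hex
  set n := Nat.find hex
  have hmin : ∀ i, 0 < i → i < n → (π ^ i) v ≠ u := fun i hi hin h =>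
    Nat.find_min hex hin ⟨hi, h⟩
  -- the arc `π v, π² v, …, πⁿ v = u` is closed under `π * swap u v` and misses `v`
  let S := (fun i => (π ^ i) v) '' Icc 1 n
  have hvS : v ∉ S := by
    rintro ⟨i, ⟨hi1, hin⟩, hi : (π ^ i) v = v⟩
    rcases hin.lt_or_eq with hin | rfl
    · refine hmin (n - i) (by omega) (by omega) ?_
      calc (π ^ (n - i)) v = (π ^ (n - i)) ((π ^ i) v) := by rw [hi]
        _ = (π ^ n) v := by rw [← mul_apply, ← pow_add, Nat.sub_add_cancel hin.le]
        _ = u := hnu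
    · exact huv (hnu.symm.trans hi)
  have hS : MapsTo (π * swap u v) S S := by
    rintro _ ⟨i, ⟨hi1, hin⟩, rfl⟩
    show (π * swap u v) ((π ^ i) v) ∈ S
    rcases hin.lt_or_eq with hin | rfl
    · have hv : (π ^ i) v ≠ v := fun h => hvS ⟨i, ⟨hi1, hin.le⟩, h⟩
      refine ⟨i + 1, ⟨by omega, hin⟩, ?_⟩
      show (π ^ (i + 1)) v = _
      rw [mul_apply, swap_apply_of_ne_of_ne (hmin i hi1 hin) hv, pow_succ', mul_apply]
    · refine ⟨1, ⟨le_rfl, hn0⟩, ?_⟩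
      show (π ^ 1) v = _
      rw [mul_apply, hnu, swap_apply_left, pow_one]
  exact fun h' => hvS (h'.mem_of_mapsTo hS ⟨n, ⟨hn0, le_rfl⟩, hnu⟩)

theorem numCycles_le_numCycles_mul_swap_mul_swap_add_two (π : Perm α) (a b c d : α) :
    π.numCycles ≤ (π * swap a b * swap c d).numCycles + 2 := by
  have h₁ := numCycles_le_numCycles_mul_swap_add_one π a b
  have h₂ := numCycles_le_numCycles_mul_swap_add_one (π * swap a b) c d
  omega

theorem SameCycle.of_mul_swap {π : Perm α} {u v a b : α} (huv : SameCycle π u v)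
    (h : SameCycle (π * swap u v) a b) : SameCycle π a b :=
  cycleClass_eq_iff.1 <| h.apply_eq_of_invariant fun c => by
    rw [mul_apply, cycleClass_apply, cycleClass_swap_apply huv]

theorem numCycles_add_one_le_numCycles_mul_swap {π : Perm α} {u v : α} (huv : u ≠ v)
    (h : SameCycle π u v) : π.numCycles + 1 ≤ (π * swap u v).numCycles := by
  let f : (π * swap u v).Cycles → π.Cycles := Cycles.lift π.cycleClass fun a => by
    rw [mul_apply, cycleClass_apply, cycleClass_swap_apply h]
  have hf : Surjective f := fun q => by
    obtain ⟨a, rfl⟩ := π.cycleClass_surjective q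
    exact ⟨(π * swap u v).cycleClass a, rfl⟩
  have hf' : ¬ Injective f := fun hinj =>
    not_sameCycle_mul_swap huv h (cycleClass_eq_iff.1 (@hinj ((π * swap u v).cycleClass u)
      ((π * swap u v).cycleClass v) (cycleClass_eq_iff.2 h)))
  exact Nat.card_lt_of_surjective_of_not_injective hf hf'

end Equiv.Perm

end

theorem MulAction.eq_of_orbitRel_closure {M α β : Type*} [Group M] [MulAction M α] {S : Set M}
    {f : α → β} (hf : ∀ g ∈ S, ∀ a, f (g • a) = f a) {a b : α}
    (h : MulAction.orbitRel (Subgroup.closure S) α a b) : f a = f b := by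
  suffices key : ∀ g ∈ Subgroup.closure S, ∀ c, f (g • c) = f c by
    obtain ⟨⟨g, hg⟩, rfl⟩ := h
    exact key g hg b
  intro g hg
  induction hg using Subgroup.closure_induction with
  | mem g hg => exact hf g hg
  | one => simp
  | mul g₁ g₂ _ _ h₁ h₂ => intro c; rw [mul_smul, h₁, h₂]
  | inv g _ hg => intro c; rw [← hg (g⁻¹ • c), smul_inv_smul]

namespace AltPaper

open SimpleGraph Equiv Equiv.Perm Set

variable {V : Type*} {G : SimpleGraph V}

instance [Finite V] : Finite G.Dart := Finite.of_injective _ Dart.toProd_injective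

theorem dartRev_inv : (dartRev G)⁻¹ = dartRev G :=
  Function.Involutive.toPerm_symm _

theorem dartRev_dartRev (d : G.Dart) : dartRev G (dartRev G d) = d := d.symm_symm

namespace RotSys

abbrev Comps (R : RotSys G) : Type _ :=
  MulAction.orbitRel.Quotient (Subgroup.closure {R.rot, dartRev G}) G.Dart

def comp (R : RotSys G) (d : G.Dart) : R.Comps := Quotient.mk'' d

theorem comp_surjective (R : RotSys G) : Function.Surjective R.comp := Quotient.mk''_surjective

theorem comp_rot (R : RotSys G) (d : G.Dart) : R.comp (R.rot d) = R.comp d :=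
  Quotient.sound' ⟨⟨_, Subgroup.subset_closure (mem_insert _ _)⟩, rfl⟩

theorem comp_dartRev (R : RotSys G) (d : G.Dart) : R.comp (dartRev G d) = R.comp d :=
  Quotient.sound' ⟨⟨_, Subgroup.subset_closure (mem_insert_of_mem _ rfl)⟩, rfl⟩

theorem sameCycle_rot (R : RotSys G) {d d' : G.Dart} (h : d.fst = d'.fst) :
    SameCycle R.rot d d' :=
  let ⟨n, hn⟩ := R.orbit_full d d' h
  ⟨n, by rwa [zpow_natCast]⟩

def ofSameCycle [Finite V] (ρ : Perm G.Dart) (hfst : ∀ d, (ρ d).fst = d.fst)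
    (hcyc : ∀ d d', d.fst = d'.fst → SameCycle ρ d d') : RotSys G where
  rot := ρ
  fst_rot := hfst
  orbit_full d d' h := (hcyc d d' h).exists_nat_pow_eq

theorem cofacial_of_altFace {R : RotSys G} {x y : V} (h : R.altFace x y) : R.Cofacial x y :=
  let ⟨d, a, _, _, _, _, _, _, hd, ha, _⟩ := h
  ⟨d, a, hd, ha⟩

end RotSys

theorem GenusLE.mono {m n : ℕ} (h : GenusLE G m) (hmn : m ≤ n) : GenusLE G n :=
  let ⟨R, hR⟩ := h
  ⟨R, by unfold RotSys.genusLE at hR ⊢; omega⟩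

theorem AltEmb.genusLE {x y : V} {k : ℕ} (h : AltEmb G x y k) : GenusLE G k :=
  let ⟨R, hR, _⟩ := h
  ⟨R, hR⟩

theorem Akxy.genusLE {x y : V} {k : ℕ} (h : Akxy G x y k) : GenusLE G k :=
  h.elim (fun h => h.mono (Nat.sub_le k 1)) AltEmb.genusLE

section InsertEdge

variable {x y : V}

def oldDart (G : SimpleGraph V) (x y : V) : (G.deleteEdges {s(x, y)}).Dart ↪ G.Dart where
  toFun d := ⟨d.toProd, deleteEdges_le _ d.adj⟩
  inj' _ _ h := Dart.ext _ _ (congrArg (fun d : G.Dart => d.toProd) h)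

theorem oldDart_fst (z : (G.deleteEdges {s(x, y)}).Dart) : (oldDart G x y z).fst = z.fst := rfl

theorem dartRev_oldDart (z : (G.deleteEdges {s(x, y)}).Dart) :
    dartRev G (oldDart G x y z) = oldDart G x y (dartRev _ z) := rfl

theorem mem_range_oldDart {d : G.Dart} : d ∈ range (oldDart G x y) ↔ d.edge ≠ s(x, y) := by
  constructor
  · rintro ⟨z, rfl⟩
    exact (deleteEdges_adj.1 z.adj).2
  · intro h
    exact ⟨⟨d.toProd, deleteEdges_adj.2 ⟨d.adj, h⟩⟩, rfl⟩

def edgeDart (hxy : G.Adj x y) : G.Dart := ⟨(x, y), hxy⟩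

theorem dartRev_edgeDart (hxy : G.Adj x y) : dartRev G (edgeDart hxy) = edgeDart hxy.symm := rfl

theorem edgeDart_notMem_range (hxy : G.Adj x y) : edgeDart hxy ∉ range (oldDart G x y) :=
  fun h => mem_range_oldDart.1 h rfl

theorem edgeDart_symm_notMem_range (hxy : G.Adj x y) :
    edgeDart hxy.symm ∉ range (oldDart G x y) :=
  fun h => mem_range_oldDart.1 h Sym2.eq_swap

theorem edgeDart_ne_edgeDart_symm (hxy : G.Adj x y) : edgeDart hxy ≠ edgeDart hxy.symm :=
  fun h => hxy.ne (congrArg (fun d : G.Dart => d.fst) h)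

theorem mem_range_oldDart_or (hxy : G.Adj x y) (d : G.Dart) :
    d ∈ range (oldDart G x y) ∨ d = edgeDart hxy ∨ d = edgeDart hxy.symm := by
  by_cases h : d.edge = s(x, y)
  · rcases dart_edge_eq_mk'_iff.1 h with h | h
    · exact Or.inr (Or.inl (Dart.ext _ _ h))
    · exact Or.inr (Or.inr (Dart.ext _ _ h))
  · exact Or.inl (mem_range_oldDart.2 h)

theorem mem_range_oldDart_of_fst_ne {d : G.Dart} (hx : d.fst ≠ x) (hy : d.fst ≠ y) :
    d ∈ range (oldDart G x y) :=
  mem_range_oldDart.2 fun h => by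
    rcases dart_edge_eq_mk'_iff'.1 h with ⟨h, -⟩ | ⟨h, -⟩
    exacts [hx h, hy h]

/-- A dart at `v` after which the new dart at `v` is inserted: a dart of `G - xy`, unless `v` is
isolated in `G - xy`. -/
def IsAnchor (G : SimpleGraph V) (x y v : V) (a : G.Dart) : Prop :=
  a.fst = v ∧
    (a ∈ range (oldDart G x y) ∨ ∀ z : (G.deleteEdges {s(x, y)}).Dart, z.fst ≠ v)

theorem isAnchor_oldDart (z : (G.deleteEdges {s(x, y)}).Dart) :
    IsAnchor G x y z.fst (oldDart G x y z) :=
  ⟨rfl, Or.inl (mem_range_self z)⟩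

theorem exists_isAnchor {v : V} (e : G.Dart) (he : e.fst = v) :
    ∃ a, IsAnchor G x y v a ∧ (a ∈ range (oldDart G x y) ∨ a = e) := by
  by_cases h : ∃ z : (G.deleteEdges {s(x, y)}).Dart, z.fst = v
  · obtain ⟨z, rfl⟩ := h
    exact ⟨_, isAnchor_oldDart z, Or.inl (mem_range_self z)⟩
  · simp only [not_exists] at h
    exact ⟨e, ⟨he, Or.inr h⟩, Or.inr rfl⟩

theorem card_edgeSet_deleteEdges [Finite V] (hxy : G.Adj x y) :
    Nat.card (G.deleteEdges {s(x, y)}).edgeSet + 1 = Nat.card G.edgeSet := by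
  rw [Nat.card_coe_set_eq, Nat.card_coe_set_eq, edgeSet_deleteEdges]
  exact ncard_sdiff_singleton_add_one (G.mem_edgeSet.2 hxy) (toFinite _)

section Lift

variable (R : RotSys (G.deleteEdges {s(x, y)}))

noncomputable def liftRot : Perm G.Dart := R.rot.viaEmbedding (oldDart G x y)

theorem liftRot_oldDart (z : (G.deleteEdges {s(x, y)}).Dart) :
    liftRot R (oldDart G x y z) = oldDart G x y (R.rot z) :=
  viaEmbedding_apply _ _ _

theorem liftRot_of_notMem {d : G.Dart} (h : d ∉ range (oldDart G x y)) : liftRot R d = d :=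
  viaEmbedding_apply_of_notMem _ _ _ h

theorem liftRot_fst (d : G.Dart) : (liftRot R d).fst = d.fst := by
  by_cases h : d ∈ range (oldDart G x y)
  · obtain ⟨z, rfl⟩ := h
    rw [liftRot_oldDart, oldDart_fst, oldDart_fst, R.fst_rot]
  · rw [liftRot_of_notMem R h]

theorem liftRot_mul_dartRev_oldDart (z : (G.deleteEdges {s(x, y)}).Dart) :
    (liftRot R * dartRev G) (oldDart G x y z) = oldDart G x y (R.facePerm z) := by
  rw [mul_apply, dartRev_oldDart, liftRot_oldDart]
  rfl

variable [Finite V]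

theorem numVerts_add_two_le_numCycles_liftRot (hxy : G.Adj x y) :
    R.numVerts + 2 ≤ (liftRot R).numCycles := by
  have h := numCycles_add_ncard_le (oldDart G x y) (liftRot_oldDart R)
    (S := {edgeDart hxy, edgeDart hxy.symm})
    (by
      rw [Set.disjoint_insert_left, Set.disjoint_singleton_left]
      exact ⟨edgeDart_notMem_range hxy, edgeDart_symm_notMem_range hxy⟩)
    (Set.pairwise_pair.2 fun hne =>
      ⟨fun h => hne (h.eq_of_left (liftRot_of_notMem R (edgeDart_notMem_range hxy))),
        fun h => hne (h.eq_of_left (liftRot_of_notMem R (edgeDart_symm_notMem_range hxy))).symm⟩)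
  rw [ncard_pair (edgeDart_ne_edgeDart_symm hxy)] at h
  exact h

theorem numFaces_add_one_le_numCycles_liftRot_mul_dartRev (hxy : G.Adj x y) :
    R.numFaces + 1 ≤ (liftRot R * dartRev G).numCycles := by
  have h := numCycles_add_ncard_le (oldDart G x y) (liftRot_mul_dartRev_oldDart R)
    (S := {edgeDart hxy}) (Set.disjoint_singleton_left.2 (edgeDart_notMem_range hxy))
    (Set.pairwise_singleton _ _)
  rw [ncard_singleton] at h
  exact h

end Lift

theorem fst_swap_apply [DecidableEq V] {p q : G.Dart} (h : p.fst = q.fst) (d : G.Dart) :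
    (swap p q d).fst = d.fst := by
  rw [swap_apply_def]
  split_ifs with hp hq
  · rw [hp, h]
  · rw [hq, h]
  · rfl

section Insert

variable [DecidableEq V]

/-- The rotation of `G` in which the dart `xy` follows `a` around `x` and the dart `yx` follows
`b` around `y`. -/
noncomputable def insertRot (hxy : G.Adj x y) (R : RotSys (G.deleteEdges {s(x, y)}))
    (a b : G.Dart) : Perm G.Dart :=
  liftRot R * swap a (edgeDart hxy) * swap b (edgeDart hxy.symm)

variable {hxy : G.Adj x y} {R : RotSys (G.deleteEdges {s(x, y)})} {a b : G.Dart}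

theorem insertRot_mul_dartRev : insertRot hxy R a b * dartRev G =
    liftRot R * dartRev G * swap (dartRev G a) (edgeDart hxy.symm) *
      swap (dartRev G b) (edgeDart hxy) := by
  rw [insertRot, mul_assoc, swap_mul_eq_mul_swap, ← mul_assoc, mul_assoc (liftRot R),
    swap_mul_eq_mul_swap, dartRev_inv, ← mul_assoc]
  rfl

theorem insertRot_left (ha : a.fst = x) (hb : b.fst = y) :
    insertRot hxy R a b a = edgeDart hxy := by
  have hab : a ≠ b := fun h => hxy.ne (by rw [← ha, ← hb, h])
  have ha' : a ≠ edgeDart hxy.symm := fun h => hxy.ne (by rw [← ha, h]; rfl)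
  rw [insertRot, mul_apply, mul_apply, swap_apply_of_ne_of_ne hab ha', swap_apply_left,
    liftRot_of_notMem R (edgeDart_notMem_range hxy)]

theorem insertRot_right (ha : a.fst = x) :
    insertRot hxy R a b b = edgeDart hxy.symm := by
  have ha' : edgeDart hxy.symm ≠ a := fun h => hxy.ne (by rw [← ha, ← h]; rfl)
  rw [insertRot, mul_apply, mul_apply, swap_apply_left,
    swap_apply_of_ne_of_ne ha' (edgeDart_ne_edgeDart_symm hxy).symm,
    liftRot_of_notMem R (edgeDart_symm_notMem_range hxy)]

theorem insertRot_fst (ha : a.fst = x) (hb : b.fst = y) (d : G.Dart) :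
    (insertRot hxy R a b d).fst = d.fst := by
  rw [insertRot, mul_apply, mul_apply, liftRot_fst, fst_swap_apply ha, fst_swap_apply hb]

theorem cycleClass_insertRot_liftRot (ha : a.fst = x) (hb : b.fst = y) (d : G.Dart) :
    (insertRot hxy R a b).cycleClass (liftRot R d) = (insertRot hxy R a b).cycleClass d := by
  have hlift : liftRot R = insertRot hxy R a b * swap b (edgeDart hxy.symm) *
      swap a (edgeDart hxy) := by
    rw [insertRot, mul_swap_mul_self, mul_swap_mul_self]
  have ha' : SameCycle (insertRot hxy R a b) a (edgeDart hxy) := by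
    rw [← insertRot_left ha hb]
    exact (SameCycle.refl _ _).apply_right
  have hb' : SameCycle (insertRot hxy R a b) b (edgeDart hxy.symm) := by
    rw [← insertRot_right ha]
    exact (SameCycle.refl _ _).apply_right
  rw [hlift, mul_apply, mul_apply, cycleClass_apply, cycleClass_swap_apply hb',
    cycleClass_swap_apply ha']

variable [Finite V]

theorem sameCycle_insertRot_oldDart (ha : a.fst = x) (hb : b.fst = y)
    {z z' : (G.deleteEdges {s(x, y)}).Dart} (h : z.fst = z'.fst) :
    SameCycle (insertRot hxy R a b) (oldDart G x y z) (oldDart G x y z') :=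
  cycleClass_eq_iff.1 <| (SameCycle.of_semiconj (liftRot_oldDart R)
    (R.sameCycle_rot h)).apply_eq_of_invariant (cycleClass_insertRot_liftRot ha hb)

theorem sameCycle_insertRot_edgeDart (ha : IsAnchor G x y x a) (hb : b.fst = y) {d : G.Dart}
    (hd : d.fst = x) : SameCycle (insertRot hxy R a b) d (edgeDart hxy) := by
  rcases mem_range_oldDart_or hxy d with ⟨z, rfl⟩ | rfl | rfl
  · obtain ⟨za, rfl⟩ := ha.2.resolve_right fun h => h z hd
    refine (sameCycle_insertRot_oldDart ha.1 hb (hd.trans ha.1.symm)).trans ?_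
    rw [← insertRot_left ha.1 hb]
    exact (SameCycle.refl _ _).apply_right
  · rfl
  · exact (hxy.ne hd.symm).elim

theorem sameCycle_insertRot_edgeDart_symm (ha : a.fst = x) (hb : IsAnchor G x y y b) {d : G.Dart}
    (hd : d.fst = y) : SameCycle (insertRot hxy R a b) d (edgeDart hxy.symm) := by
  rcases mem_range_oldDart_or hxy d with ⟨z, rfl⟩ | rfl | rfl
  · obtain ⟨zb, rfl⟩ := hb.2.resolve_right fun h => h z hd
    refine (sameCycle_insertRot_oldDart ha hb.1 (hd.trans hb.1.symm)).trans ?_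
    rw [← insertRot_right ha]
    exact (SameCycle.refl _ _).apply_right
  · exact (hxy.ne hd).elim
  · rfl

/-- Inserting the edge inside a face splits that face. -/
theorem numCycles_liftRot_mul_dartRev_le (ha : a ∈ range (oldDart G x y))
    (hb : b ∈ range (oldDart G x y))
    (h : SameCycle (liftRot R * dartRev G) (dartRev G a) (dartRev G b)) :
    (liftRot R * dartRev G).numCycles ≤ (insertRot hxy R a b * dartRev G).numCycles := by
  obtain ⟨za, rfl⟩ := ha
  obtain ⟨zb, rfl⟩ := hb
  have hna : edgeDart hxy ≠ dartRev G (oldDart G x y za) :=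
    fun h => edgeDart_notMem_range hxy ⟨dartRev _ za, h.symm⟩
  have hnb : dartRev G (oldDart G x y zb) ≠ edgeDart hxy :=
    fun h => edgeDart_notMem_range hxy ⟨dartRev _ zb, h⟩
  rw [insertRot_mul_dartRev]
  set φ := liftRot R * dartRev G
  set ψ := φ * swap (dartRev G (oldDart G x y za)) (edgeDart hxy.symm)
  have hψa : ψ (dartRev G (oldDart G x y za)) = edgeDart hxy := by
    rw [mul_apply, swap_apply_left, mul_apply, dartRev_edgeDart]
    exact liftRot_of_notMem R (edgeDart_notMem_range hxy)
  have hψx : ψ (edgeDart hxy) = edgeDart hxy.symm := by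
    rw [mul_apply, swap_apply_of_ne_of_ne hna (edgeDart_ne_edgeDart_symm hxy), mul_apply,
      dartRev_edgeDart]
    exact liftRot_of_notMem R (edgeDart_symm_notMem_range hxy)
  -- the first transposition joins the face through `dartRev a` to the face `xy, yx` ...
  have hψ : SameCycle ψ (dartRev G (oldDart G x y za)) (edgeDart hxy.symm) := by
    refine ((SameCycle.refl ψ _).apply_right.trans (SameCycle.refl ψ _).apply_right).trans ?_
    rw [hψa, hψx]
  have hbψ : SameCycle ψ (dartRev G (oldDart G x y zb)) (edgeDart hxy) := by
    have hφ : φ = ψ * swap (dartRev G (oldDart G x y za)) (edgeDart hxy.symm) :=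
      (mul_swap_mul_self _ _ _).symm
    refine (hψ.of_mul_swap (hφ ▸ h.symm)).trans ?_
    rw [← hψa]
    exact (SameCycle.refl ψ _).apply_right
  have h₁ : φ.numCycles ≤ ψ.numCycles + 1 := numCycles_le_numCycles_mul_swap_add_one _ _ _
  have h₂ := numCycles_add_one_le_numCycles_mul_swap hnb hbψ
  omega

variable (hxy R)

noncomputable def insertEdge (ha : IsAnchor G x y x a) (hb : IsAnchor G x y y b) : RotSys G :=
  RotSys.ofSameCycle (insertRot hxy R a b) (insertRot_fst ha.1 hb.1) fun d d' h => by
    by_cases hx : d.fst = x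
    · exact (sameCycle_insertRot_edgeDart ha hb.1 hx).trans
        (sameCycle_insertRot_edgeDart ha hb.1 (h.symm.trans hx)).symm
    by_cases hy : d.fst = y
    · exact (sameCycle_insertRot_edgeDart_symm ha.1 hb hy).trans
        (sameCycle_insertRot_edgeDart_symm ha.1 hb (h.symm.trans hy)).symm
    obtain ⟨z, rfl⟩ := mem_range_oldDart_of_fst_ne hx hy
    obtain ⟨z', rfl⟩ := mem_range_oldDart_of_fst_ne (fun h' => hx (h.trans h'))
      (fun h' => hy (h.trans h'))
    exact sameCycle_insertRot_oldDart ha.1 hb.1 h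

variable (ha : IsAnchor G x y x a) (hb : IsAnchor G x y y b)

theorem exists_comps_map_insertEdge :
    ∃ F : R.Comps → (insertEdge hxy R ha hb).Comps, ∀ q, q ∈ range F ∨
      q = (insertEdge hxy R ha hb).comp (edgeDart hxy) ∧ a ∉ range (oldDart G x y) ∧
        b ∉ range (oldDart G x y) := by
  set S := insertEdge hxy R ha hb
  have hlift (d : G.Dart) : S.comp (liftRot R d) = S.comp d :=
    (cycleClass_eq_iff.1 (cycleClass_insertRot_liftRot ha.1 hb.1 d)).apply_eq_of_invariant
      S.comp_rot
  let F : R.Comps → S.Comps :=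
    Quotient.lift (fun z => S.comp (oldDart G x y z)) fun z z' h =>
      MulAction.eq_of_orbitRel_closure (f := fun z => S.comp (oldDart G x y z)) (by
        rintro g (rfl | rfl) z
        · exact (congrArg S.comp (liftRot_oldDart R z)).symm.trans (hlift _)
        · exact S.comp_dartRev (oldDart G x y z)) h
  have hnew : S.comp (edgeDart hxy) ∈ range F ∨
      a ∉ range (oldDart G x y) ∧ b ∉ range (oldDart G x y) := by
    by_cases ha' : a ∈ range (oldDart G x y)
    · obtain ⟨za, rfl⟩ := ha'
      refine Or.inl ⟨R.comp za, (S.comp_rot _).symm.trans ?_⟩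
      rw [show S.rot = insertRot hxy R _ b from rfl, insertRot_left ha.1 hb.1]
    by_cases hb' : b ∈ range (oldDart G x y)
    · obtain ⟨zb, rfl⟩ := hb'
      refine Or.inl ⟨R.comp zb, (S.comp_rot _).symm.trans ?_⟩
      rw [show S.rot = insertRot hxy R a _ from rfl, insertRot_right ha.1, ← dartRev_edgeDart]
      exact S.comp_dartRev _
    exact Or.inr ⟨ha', hb'⟩
  refine ⟨F, fun q => ?_⟩
  obtain ⟨d, rfl⟩ := S.comp_surjective q
  rcases mem_range_oldDart_or hxy d with ⟨z, rfl⟩ | rfl | rfl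
  · exact Or.inl ⟨R.comp z, rfl⟩
  · exact hnew.imp_right fun h => ⟨rfl, h⟩
  · rw [← dartRev_edgeDart hxy, S.comp_dartRev]
    exact hnew.imp_right fun h => ⟨rfl, h⟩

theorem numComps_insertEdge_le : (insertEdge hxy R ha hb).numComps ≤ R.numComps + 1 := by
  obtain ⟨F, hF⟩ := exists_comps_map_insertEdge hxy R ha hb
  have hsurj : Function.Surjective
      (Sum.elim F fun _ : Unit => (insertEdge hxy R ha hb).comp (edgeDart hxy)) := fun q => by
    rcases hF q with ⟨p, hp⟩ | ⟨hq, -⟩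
    exacts [⟨Sum.inl p, hp⟩, ⟨Sum.inr (), hq.symm⟩]
  simpa [RotSys.numComps, Nat.card_sum] using Nat.card_le_card_of_surjective _ hsurj

theorem numComps_insertEdge_le_of_mem_range
    (hab : a ∈ range (oldDart G x y) ∨ b ∈ range (oldDart G x y)) :
    (insertEdge hxy R ha hb).numComps ≤ R.numComps := by
  obtain ⟨F, hF⟩ := exists_comps_map_insertEdge hxy R ha hb
  exact Nat.card_le_card_of_surjective F fun q =>
    (hF q).resolve_right fun h => hab.elim h.2.1 h.2.2

theorem genusLE_insertEdge {m t : ℕ} (hR : R.genusLE m)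
    (h : 2 * (insertEdge hxy R ha hb).numComps + R.numFaces + R.numVerts + 1 ≤
      2 * R.numComps + 2 * t + (insertRot hxy R a b * dartRev G).numCycles +
        (insertRot hxy R a b).numCycles) :
    (insertEdge hxy R ha hb).genusLE (m + t) := by
  have := card_edgeSet_deleteEdges hxy
  unfold RotSys.genusLE at hR ⊢
  change _ ≤ _ + (insertRot hxy R a b * dartRev G).numCycles + (insertRot hxy R a b).numCycles
  omega

end Insert

theorem GenusLE.of_deleteEdges [Finite V] (hxy : G.Adj x y) {m : ℕ}
    (h : GenusLE (G.deleteEdges {s(x, y)}) m) : GenusLE G (m + 1) := by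
  classical
  obtain ⟨R, hR⟩ := h
  obtain ⟨a, ha, ha'⟩ := exists_isAnchor (x := x) (y := y) (v := x) (edgeDart hxy) rfl
  obtain ⟨b, hb, hb'⟩ := exists_isAnchor (x := x) (y := y) (v := y) (edgeDart hxy.symm) rfl
  refine ⟨insertEdge hxy R ha hb, genusLE_insertEdge hxy R ha hb hR ?_⟩
  have hV := numVerts_add_two_le_numCycles_liftRot R hxy
  have hF := numFaces_add_one_le_numCycles_liftRot_mul_dartRev R hxy
  by_cases hab : a ∈ range (oldDart G x y) ∨ b ∈ range (oldDart G x y)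
  · have hC := numComps_insertEdge_le_of_mem_range hxy R ha hb hab
    have hV' := numCycles_le_numCycles_mul_swap_mul_swap_add_two (liftRot R) a (edgeDart hxy) b
      (edgeDart hxy.symm)
    have hF' := numCycles_le_numCycles_mul_swap_mul_swap_add_two (liftRot R * dartRev G)
      (dartRev G a) (edgeDart hxy.symm) (dartRev G b) (edgeDart hxy)
    rw [← insertRot_mul_dartRev] at hF'
    change _ ≤ (insertRot hxy R a b).numCycles + 2 at hV'
    omega
  · rw [not_or] at hab
    obtain rfl := ha'.resolve_left hab.1
    obtain rfl := hb'.resolve_left hab.2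
    have hC := numComps_insertEdge_le hxy R ha hb
    have hlift : insertRot hxy R (edgeDart hxy) (edgeDart hxy.symm) = liftRot R := by
      rw [insertRot, swap_self, swap_self, ← Perm.one_def, mul_one, mul_one]
    rw [hlift]
    omega

theorem genusLE_of_cofacial [Finite V] (hxy : G.Adj x y)
    {R : RotSys (G.deleteEdges {s(x, y)})} {k : ℕ} (hR : R.genusLE k) (hc : R.Cofacial x y) :
    GenusLE G k := by
  classical
  obtain ⟨d₀, n, hd₀, hn⟩ := hc
  have hrot (d : (G.deleteEdges {s(x, y)}).Dart) : (R.rot⁻¹ d).fst = d.fst := by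
    simpa using (R.fst_rot (R.rot⁻¹ d)).symm
  -- `a`, `b` precede `d₀`, `φⁿ d₀` in the rotations, so their reversals lie on that face
  set a := oldDart G x y (R.rot⁻¹ d₀)
  set b := oldDart G x y (R.rot⁻¹ ((R.facePerm ^ n) d₀))
  have ha : IsAnchor G x y x a := by
    simpa only [hrot, hd₀] using isAnchor_oldDart (R.rot⁻¹ d₀)
  have hb : IsAnchor G x y y b := by
    simpa only [hrot, hn] using isAnchor_oldDart (R.rot⁻¹ ((R.facePerm ^ n) d₀))
  refine ⟨insertEdge hxy R ha hb, genusLE_insertEdge hxy R ha hb hR (t := 0) ?_⟩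
  have hφ (z : (G.deleteEdges {s(x, y)}).Dart) :
      (liftRot R * dartRev G) (dartRev G (oldDart G x y (R.rot⁻¹ z))) = oldDart G x y z := by
    rw [mul_apply, dartRev_dartRev, liftRot_oldDart]
    exact congrArg _ (R.rot.apply_symm_apply z)
  have hface : SameCycle (liftRot R * dartRev G) (dartRev G a) (dartRev G b) := by
    rw [← sameCycle_apply_left, ← sameCycle_apply_right, hφ, hφ]
    exact SameCycle.of_semiconj (liftRot_mul_dartRev_oldDart R) ⟨n, by rw [zpow_natCast]⟩
  have hV := numVerts_add_two_le_numCycles_liftRot R hxy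
  have hV' := numCycles_le_numCycles_mul_swap_mul_swap_add_two (liftRot R) a (edgeDart hxy) b
    (edgeDart hxy.symm)
  have hF := numFaces_add_one_le_numCycles_liftRot_mul_dartRev R hxy
  have hF' : (liftRot R * dartRev G).numCycles ≤ (insertRot hxy R a b * dartRev G).numCycles :=
    numCycles_liftRot_mul_dartRev_le (mem_range_self _) (mem_range_self _) hface
  have hC := numComps_insertEdge_le_of_mem_range hxy R ha hb (Or.inl (mem_range_self _))
  change _ ≤ (insertRot hxy R a b).numCycles + 2 at hV'
  omega

end InsertEdge

end AltPaper

open AltPaper in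
/-- first half of Lemma lm-alt-jump: If `G` is an obstruction for the class
`A^k_{xy}` and `G` does not embed in the orientable surface of genus `k`, then
`xy ∉ E(G)` and `G` is a minimal (topological) obstruction for that surface. -/
theorem statement_14 {V : Type*} [Fintype V] (G : SimpleGraph V) (x y : V) (k : ℕ)
    (hk : 1 ≤ k) (hobs : MinimalNotAk G x y k) (hne : ¬ GenusLE G k) :
    ¬ G.Adj x y ∧ ∀ e ∈ G.edgeSet, GenusLE (G.deleteEdges {e}) k := by
  refine ⟨fun hxy => ?_, fun e he => (hobs.2.1 e he).genusLE⟩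
  rcases hobs.2.1 _ (G.mem_edgeSet.2 hxy) with h | ⟨R, hR, halt⟩
  · have hG := h.of_deleteEdges hxy
    rw [Nat.sub_add_cancel hk] at hG
    exact hne hG
  · exact hne (genusLE_of_cofacial hxy hR (RotSys.cofacial_of_altFace halt))
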